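/- The infinite series Σ_{k=2}^{∞} (∏_{i=2}^{k}(p_i - 2)) / ((p_k - 2) · ∏_{i=2}^{k} p_i), over the odd primes p_i (i-th prime, i ≥ 2), converges to 1/2. Equivalently, 1/3 + 1/15 + 3/105 + 15/1155 + ... = 1/2. -/

import Mathlib

/-!
Writing `Q n = ∏_{i=2}^n (1 - 2/p_i)`, the `k`-th term equals
`Q k / (p_k - 2) = (Q (k-1) - Q k) / 2`, so the partial sums telescope to `(1 - Q n) / 2`.
Since `∏ (1 - 2/p_i) ≤ exp (-2 ∑ 1/p_i)` and the reciprocals of the primes have a divergent sum,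
`Q n → 0`.
-/

open Filter Finset Topology

/-- `p i` is the `i`-th prime (1-indexed: `p 1 = 2`). -/
noncomputable def p (i : ℕ) : ℕ := Nat.nth Nat.Prime (i - 1)

theorem sum_Icc_prod_sub_div_eq {K : Type*} [Field K] {x : ℕ → K} {c : K} (hc : c ≠ 0) {a : ℕ}
    (hx0 : ∀ i, a ≤ i → x i ≠ 0) (hxc : ∀ i, a ≤ i → x i ≠ c) (n : ℕ) :
    ∑ k ∈ Icc a n, (∏ i ∈ Icc a k, (x i - c)) / ((x k - c) * ∏ i ∈ Icc a k, x i) =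
      (1 - ∏ i ∈ Icc a n, (1 - c / x i)) / c := by
  have hterm : ∀ k, (∏ i ∈ Icc a k, (x i - c)) / ((x k - c) * ∏ i ∈ Icc a k, x i) =
      (∏ i ∈ Icc a k, (1 - c / x i)) / (x k - c) := by
    intro k
    have hQ : ∏ i ∈ Icc a k, (1 - c / x i) = (∏ i ∈ Icc a k, (x i - c)) / ∏ i ∈ Icc a k, x i := by
      rw [← prod_div_distrib]
      refine prod_congr rfl fun i hi => ?_
      rw [sub_div, div_self (hx0 i (mem_Icc.mp hi).1)]
    rw [hQ, div_div, mul_comm]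
  simp only [hterm]
  rcases lt_or_ge n a with hn | hn
  · simp [Icc_eq_empty_of_lt hn]
  induction n, hn using Nat.le_induction with
  | base =>
    have h0 := hx0 a le_rfl
    have h1 := sub_ne_zero.mpr (hxc a le_rfl)
    simp only [Icc_self, sum_singleton, prod_singleton]
    field_simp
    ring
  | succ n hn ih =>
    have h0 := hx0 (n + 1) (by omega)
    have h1 := sub_ne_zero.mpr (hxc (n + 1) (by omega))
    rw [sum_Icc_succ_top (by omega), prod_Icc_succ_top (by omega), ih]
    field_simp
    ring

theorem tendsto_prod_range_one_sub_of_not_summable {f : ℕ → ℝ} (hf0 : ∀ i, 0 ≤ f i)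
    (hf1 : ∀ i, f i ≤ 1) (hf : ¬ Summable f) :
    Tendsto (fun n => ∏ i ∈ range n, (1 - f i)) atTop (𝓝 0) := by
  have hsum : Tendsto (fun n => ∑ i ∈ range n, f i) atTop atTop :=
    (not_summable_iff_tendsto_nat_atTop_of_nonneg hf0).mp hf
  refine squeeze_zero (fun n => prod_nonneg fun i _ => sub_nonneg.mpr (hf1 i)) (fun n => ?_)
    (Real.tendsto_exp_neg_atTop_nhds_zero.comp hsum)
  calc ∏ i ∈ range n, (1 - f i)
      ≤ ∏ i ∈ range n, Real.exp (-f i) :=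
        prod_le_prod (fun i _ => sub_nonneg.mpr (hf1 i)) fun i _ => Real.one_sub_le_exp_neg _
    _ = Real.exp (-∑ i ∈ range n, f i) := by rw [← sum_neg_distrib, Real.exp_sum]

theorem not_summable_one_div_nth_prime :
    ¬ Summable (fun n => 1 / (Nat.nth Nat.Prime n : ℝ)) := by
  have hinf := Nat.infinite_setOfPred_prime
  intro h
  refine not_summable_one_div_on_primes ((Function.Injective.summable_iff (Nat.nth_injective hinf)
    fun q hq => ?_).mp ?_)
  · rw [Nat.range_nth_of_infinite hinf] at hq
    exact Set.indicator_of_notMem hq _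
  · convert h using 2 with n
    exact Set.indicator_of_mem (Nat.prime_nth_prime n) _

theorem three_le_p {i : ℕ} (hi : 2 ≤ i) : 3 ≤ p i := by
  have := Nat.add_two_le_nth_prime (i - 1)
  rw [p]
  omega

theorem tendsto_prod_one_sub_two_div_p :
    Tendsto (fun n => ∏ i ∈ Icc 2 n, (1 - 2 / (p i : ℝ))) atTop (𝓝 0) := by
  set f : ℕ → ℝ := fun j => 2 / (p (j + 2) : ℝ) with hf
  have hreindex : ∀ n, ∏ i ∈ Icc 2 n, (1 - 2 / (p i : ℝ)) = ∏ j ∈ range (n - 1), (1 - f j) := by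
    intro n
    rw [← Ico_add_one_right_eq_Icc, prod_Ico_eq_prod_range, show n + 1 - 2 = n - 1 by omega]
    simp only [hf, add_comm]
  have hp3 : ∀ j, (3 : ℝ) ≤ p (j + 2) := fun j => by exact_mod_cast three_le_p (by omega)
  have hf_not : ¬ Summable f := by
    have hf_eq : f = fun j => 2 * (1 / (Nat.nth Nat.Prime (j + 1) : ℝ)) := by
      ext j; simp [hf, p, div_eq_mul_inv]
    rw [hf_eq, summable_mul_left_iff two_ne_zero]
    exact (summable_nat_add_iff 1).not.mpr not_summable_one_div_nth_prime
  simp only [hreindex]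
  refine (tendsto_prod_range_one_sub_of_not_summable (fun j => ?_) (fun j => ?_) hf_not).comp
    (tendsto_sub_atTop_nat 1)
  · have := hp3 j; positivity
  · have := hp3 j; rw [hf, div_le_one (by linarith)]; linarith

theorem stmt_8 :
    Tendsto (fun n : ℕ => ∑ k ∈ Finset.Icc 2 n,
        (∏ i ∈ Finset.Icc 2 k, ((p i : ℝ) - 2)) /
          (((p k : ℝ) - 2) * ∏ i ∈ Finset.Icc 2 k, (p i : ℝ)))
      atTop (𝓝 (1 / 2)) := by
  have hp3 : ∀ i, 2 ≤ i → (3 : ℝ) ≤ p i := fun i hi => by exact_mod_cast three_le_p hi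
  simp only [sum_Icc_prod_sub_div_eq (x := fun i => (p i : ℝ)) two_ne_zero
    (fun i hi => by linarith [hp3 i hi]) (fun i hi => by linarith [hp3 i hi])]
  simpa using (tendsto_prod_one_sub_two_div_p.const_sub 1).div_const 2
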